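/- The following identities of linear maps g → S hold exactly (not merely up to coboundary): c^{(p−1)/2}·C = h^p·δ + e^p·δ_e + f^p·δ_f and c^{(p+1)/2}·δ = h^p·C − e^p·F + f^p·E. -/

import Mathlib

noncomputable section
open MvPolynomial

/-- `sl₂(k)`, realised as coordinate triples w.r.t. the standard basis `e, h, f`. -/
def sl2 (k : Type) [Field k] : Type := Fin 3 → k

variable (k : Type) [Field k]

namespace sl2

instance : AddCommGroup (sl2 k) := Pi.addCommGroup
instance : Module k (sl2 k) := Pi.module _ _ _

/-- the standard basis vector `e` -/
def E : sl2 k := ![1, 0, 0]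
/-- the standard basis vector `h` -/
def H : sl2 k := ![0, 1, 0]
/-- the standard basis vector `f` -/
def F : sl2 k := ![0, 0, 1]

/-- The identification of `sl₂` with coordinate triples. -/
def coordEquiv : sl2 k ≃ₗ[k] (Fin 3 → k) := LinearEquiv.refl k (sl2 k)

/-- The standard basis of `sl₂`. -/
def basis : Module.Basis (Fin 3) k (sl2 k) := Module.Basis.ofEquivFun (coordEquiv k)

variable {k}

@[simp] lemma add_apply (u v : sl2 k) (i : Fin 3) : (u + v) i = u i + v i := rfl
@[simp] lemma smul_apply (t : k) (u : sl2 k) (i : Fin 3) : (t • u) i = t * u i := rfl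
@[simp] lemma neg_apply (u : sl2 k) (i : Fin 3) : (-u) i = -(u i) := rfl
@[simp] lemma zero_apply (i : Fin 3) : (0 : sl2 k) i = 0 := rfl
@[simp] lemma E_apply₀ : E k 0 = 1 := rfl
@[simp] lemma E_apply₁ : E k 1 = 0 := rfl
@[simp] lemma E_apply₂ : E k 2 = 0 := rfl
@[simp] lemma H_apply₀ : H k 0 = 0 := rfl
@[simp] lemma H_apply₁ : H k 1 = 1 := rfl
@[simp] lemma H_apply₂ : H k 2 = 0 := rfl
@[simp] lemma F_apply₀ : F k 0 = 0 := rfl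
@[simp] lemma F_apply₁ : F k 1 = 0 := rfl
@[simp] lemma F_apply₂ : F k 2 = 1 := rfl

variable (k)

instance : LieRing (sl2 k) :=
  { (inferInstance : AddCommGroup (sl2 k)) with
    bracket := fun u v => ![2 * (u 1 * v 0 - u 0 * v 1),
                            u 0 * v 2 - u 2 * v 0,
                            2 * (u 2 * v 1 - u 1 * v 2)]
    add_lie := by
      intro u v w; funext i; fin_cases i <;>
        · show _ = (_ : k) + _
          simp <;> ring
    lie_add := by
      intro u v w; funext i; fin_cases i <;>
        · show _ = (_ : k) + _
          simp <;> ring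
    lie_self := by
      intro u; funext i; fin_cases i
      · show 2 * (u 1 * u 0 - u 0 * u 1) = (0 : sl2 k) 0; show _ = (0:k); ring
      · show u 0 * u 2 - u 2 * u 0 = (0 : sl2 k) 1; show _ = (0:k); ring
      · show 2 * (u 2 * u 1 - u 1 * u 2) = (0 : sl2 k) 2; show _ = (0:k); ring
    leibniz_lie := by
      intro u v w; funext i; fin_cases i <;>
        · show _ = (_ : k) + _
          simp <;> ring }

variable {k}

@[simp] lemma lie_apply₀ (u v : sl2 k) : ⁅u, v⁆ 0 = 2 * (u 1 * v 0 - u 0 * v 1) := rfl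
@[simp] lemma lie_apply₁ (u v : sl2 k) : ⁅u, v⁆ 1 = u 0 * v 2 - u 2 * v 0 := rfl
@[simp] lemma lie_apply₂ (u v : sl2 k) : ⁅u, v⁆ 2 = 2 * (u 2 * v 1 - u 1 * v 2) := rfl

variable (k)

instance : LieAlgebra k (sl2 k) where
  lie_smul t u v := by
    funext i; fin_cases i <;>
      · show _ = (_ : k) * _
        simp <;> ring

lemma lie_H_E : ⁅H k, E k⁆ = (2 : k) • E k := by
  funext i; fin_cases i <;> simp
lemma lie_H_F : ⁅H k, F k⁆ = (-2 : k) • F k := by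
  funext i; fin_cases i <;> simp
lemma lie_E_F : ⁅E k, F k⁆ = H k := by
  funext i; fin_cases i <;> simp

end sl2
/-- The symmetric algebra `S = k[e,h,f]` on the adjoint module, with
`X 0 = e`, `X 1 = h`, `X 2 = f`. -/
abbrev Sg (k : Type) [Field k] : Type := MvPolynomial (Fin 3) k

/-- The symmetric algebra `S(L(1)) = k[x,y]` on the natural module, with
`X 0 = x`, `X 1 = y`. -/
abbrev Snat (k : Type) [Field k] : Type := MvPolynomial (Fin 2) k

namespace sl2

variable (k : Type) [Field k]

/-- The degree-one coordinate embedding `g → S`. -/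
def toS : sl2 k →ₗ[k] Sg k where
  toFun u := u 0 • X 0 + u 1 • X 1 + u 2 • X 2
  map_add' u v := by simp only [add_apply, add_smul]; abel
  map_smul' t u := by simp only [smul_apply, RingHom.id_apply, smul_add, mul_smul]

variable {k}

lemma decomp (w : sl2 k) : w = w 0 • E k + w 1 • H k + w 2 • F k := by
  funext i; fin_cases i <;> simp

variable (k)

/-- The generators of `S` as images of the basis of `g`. -/
def gens : Fin 3 → sl2 k := ![E k, H k, F k]

@[simp] lemma gens₀ : gens k 0 = E k := rfl
@[simp] lemma gens₁ : gens k 1 = H k := rfl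
@[simp] lemma gens₂ : gens k 2 = F k := rfl

/-- The rows of the adjoint action. -/
def adjRow : sl2 k →ₗ[k] (Fin 3 → Sg k) where
  toFun u := fun j => toS k ⁅u, gens k j⁆
  map_add' u v := by funext j; simp only [add_lie, map_add]; rfl
  map_smul' t u := by funext j; simp only [smul_lie, map_smul]; rfl

/-- The action of `g` on its symmetric algebra `S`, by the derivations extending
the adjoint action. -/
def actS : sl2 k →ₗ[k] Derivation k (Sg k) (Sg k) :=
  (MvPolynomial.mkDerivationEquiv k).toLinearMap.comp (adjRow k)

variable {k}

@[simp] lemma actS_X (u : sl2 k) (j : Fin 3) :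
    actS k u (X j) = toS k ⁅u, gens k j⁆ :=
  MvPolynomial.mkDerivation_X _ _ _

lemma actS_toS (u w : sl2 k) : actS k u (toS k w) = toS k ⁅u, w⁆ := by
  have hw := decomp w
  have : toS k w = w 0 • (X 0 : Sg k) + w 1 • X 1 + w 2 • X 2 := rfl
  rw [this]
  simp only [map_add, Derivation.map_smul, actS_X, gens₀, gens₁, gens₂]
  conv_rhs => rw [hw]
  simp only [lie_add, lie_smul, map_add, map_smul]

lemma actS_comm (u v : sl2 k) : actS k ⁅u, v⁆ = ⁅actS k u, actS k v⁆ := by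
  apply MvPolynomial.derivation_ext
  intro j
  rw [Derivation.commutator_apply]
  simp only [actS_X, actS_toS]
  rw [← map_sub]
  congr 1
  rw [leibniz_lie]
  abel

instance : LieRingModule (sl2 k) (Sg k) where
  bracket u s := actS k u s
  add_lie u v s := by
    show actS k (u + v) s = actS k u s + actS k v s
    rw [map_add]; rfl
  lie_add u s t := by
    show actS k u (s + t) = actS k u s + actS k u t
    exact map_add _ _ _
  leibniz_lie u v s := by
    show actS k u (actS k v s) = actS k ⁅u, v⁆ s + actS k v (actS k u s)
    rw [actS_comm]
    rw [Derivation.commutator_apply]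
    abel

@[simp] lemma lie_Sg_def (u : sl2 k) (s : Sg k) : ⁅u, s⁆ = actS k u s := rfl

instance : LieModule k (sl2 k) (Sg k) where
  smul_lie t u s := by
    show actS k (t • u) s = t • actS k u s
    rw [map_smul]; rfl
  lie_smul t u s := by
    show actS k u (t • s) = t • actS k u s
    exact Derivation.map_smul _ _ _

lemma lie_mul_Sg (u : sl2 k) (s t : Sg k) :
    ⁅u, s * t⁆ = ⁅u, s⁆ * t + s * ⁅u, t⁆ := by
  show actS k u (s * t) = _
  rw [Derivation.leibniz]
  simp only [smul_eq_mul, lie_Sg_def]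
  ring

end sl2
namespace MvPolynomial

variable {k : Type} [Field k] {σ : Type*}

lemma Finsupp.degree_add' (a b : σ →₀ ℕ) :
    Finsupp.degree (a + b) = Finsupp.degree a + Finsupp.degree b := by
  simp only [Finsupp.degree_eq_weight_one, map_add]

/-- A derivation whose values on the variables are homogeneous of degree one
preserves homogeneity. -/
lemma isHomogeneous_mkDerivation (f : σ → MvPolynomial σ k)
    (hf : ∀ i, (f i).IsHomogeneous 1) {p : MvPolynomial σ k} {n : ℕ}
    (hp : p.IsHomogeneous n) :
    ((MvPolynomial.mkDerivation k f) p).IsHomogeneous n := by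
  rw [← p.support_sum_monomial_coeff, map_sum]
  apply IsHomogeneous.sum
  intro d hd
  rw [MvPolynomial.mkDerivation_monomial, smul_eq_C_mul]
  have h0 : (0 : ℕ) + n = n := by omega
  rw [← h0]
  apply (isHomogeneous_C _ _).mul
  rw [Finsupp.sum]
  apply IsHomogeneous.sum
  intro i hi
  have hdi : d i ≠ 0 := Finsupp.mem_support_iff.mp hi
  have hdeg : Finsupp.degree d = n := by
    rw [Finsupp.degree_eq_weight_one]
    exact hp (mem_support_iff.mp hd)
  have hn : 1 ≤ n := by
    have := Finsupp.le_degree i d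
    omega
  obtain ⟨m, rfl⟩ : ∃ m, n = m + 1 := ⟨n - 1, by omega⟩
  have h1 : (d - Finsupp.single i 1) + Finsupp.single i 1 = d :=
    tsub_add_cancel_of_le (by
      rw [Finsupp.single_le_iff]; omega)
  have h2 : Finsupp.degree (d - Finsupp.single i 1) = m := by
    have := congrArg Finsupp.degree h1
    rw [Finsupp.degree_add'] at this
    have hs : Finsupp.degree (Finsupp.single i 1) = 1 :=
      Finsupp.degree_single i 1
    omega
  have h3 : ((monomial (d - Finsupp.single i 1)) ((d i : k))).IsHomogeneous m :=
    isHomogeneous_monomial _ h2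
  rw [smul_eq_mul]
  exact h3.mul (hf i)

end MvPolynomial
namespace sl2

variable (k : Type) [Field k]

/-- The rows of the natural action of `sl₂` on linear forms in `x, y`:
`u · x = u₁ x + u₂ y` and `u · y = u₀ x - u₁ y`. -/
def natRow : sl2 k →ₗ[k] (Fin 2 → Snat k) where
  toFun u := ![u 1 • X 0 + u 2 • X 1, u 0 • X 0 - u 1 • X 1]
  map_add' u v := by
    funext j; fin_cases j
    · show (u + v) 1 • (X 0 : Snat k) + (u + v) 2 • X 1 =
        (u 1 • X 0 + u 2 • X 1) + (v 1 • X 0 + v 2 • X 1)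
      simp only [add_apply, add_smul]; abel
    · show (u + v) 0 • (X 0 : Snat k) - (u + v) 1 • X 1 =
        (u 0 • X 0 - u 1 • X 1) + (v 0 • X 0 - v 1 • X 1)
      simp only [add_apply, add_smul]; abel
  map_smul' t u := by
    funext j; fin_cases j
    · show (t • u) 1 • (X 0 : Snat k) + (t • u) 2 • X 1 =
        t • (u 1 • X 0 + u 2 • X 1)
      simp only [smul_apply, smul_add, mul_smul]
    · show (t • u) 0 • (X 0 : Snat k) - (t • u) 1 • X 1 =
        t • (u 0 • X 0 - u 1 • X 1)
      simp only [smul_apply, smul_sub, mul_smul]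

/-- The action of `sl₂` on the symmetric algebra of the natural module, by the
derivations extending the natural action. -/
def actP : sl2 k →ₗ[k] Derivation k (Snat k) (Snat k) :=
  (MvPolynomial.mkDerivationEquiv k).toLinearMap.comp (natRow k)

variable {k}

@[simp] lemma actP_X0 (u : sl2 k) :
    actP k u (X 0) = u 1 • (X 0 : Snat k) + u 2 • X 1 :=
  MvPolynomial.mkDerivation_X _ _ _

@[simp] lemma actP_X1 (u : sl2 k) :
    actP k u (X 1) = u 0 • (X 0 : Snat k) - u 1 • X 1 :=
  MvPolynomial.mkDerivation_X _ _ _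

lemma actP_comm (u v : sl2 k) : actP k ⁅u, v⁆ = ⁅actP k u, actP k v⁆ := by
  apply MvPolynomial.derivation_ext
  intro j
  rw [Derivation.commutator_apply]
  fin_cases j
  · show actP k ⁅u, v⁆ (X 0) = actP k u (actP k v (X 0)) - actP k v (actP k u (X 0))
    simp only [actP_X0, actP_X1, map_add, map_sub, Derivation.map_smul]
    simp only [lie_apply₀, lie_apply₁, lie_apply₂, MvPolynomial.smul_eq_C_mul,
      map_mul, map_sub, map_add, map_ofNat]
    ring
  · show actP k ⁅u, v⁆ (X 1) = actP k u (actP k v (X 1)) - actP k v (actP k u (X 1))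
    simp only [actP_X0, actP_X1, map_add, map_sub, Derivation.map_smul]
    simp only [lie_apply₀, lie_apply₁, lie_apply₂, MvPolynomial.smul_eq_C_mul,
      map_mul, map_sub, map_add, map_ofNat]
    ring

instance : LieRingModule (sl2 k) (Snat k) where
  bracket u s := actP k u s
  add_lie u v s := by
    show actP k (u + v) s = actP k u s + actP k v s
    rw [map_add]; rfl
  lie_add u s t := by
    show actP k u (s + t) = actP k u s + actP k u t
    exact map_add _ _ _
  leibniz_lie u v s := by
    show actP k u (actP k v s) = actP k ⁅u, v⁆ s + actP k v (actP k u s)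
    rw [actP_comm, Derivation.commutator_apply]
    abel

@[simp] lemma lie_Snat_def (u : sl2 k) (s : Snat k) : ⁅u, s⁆ = actP k u s := rfl

instance : LieModule k (sl2 k) (Snat k) where
  smul_lie t u s := by
    show actP k (t • u) s = t • actP k u s
    rw [map_smul]; rfl
  lie_smul t u s := by
    show actP k u (t • s) = t • actP k u s
    exact Derivation.map_smul _ _ _

lemma lie_mul_Snat (u : sl2 k) (s t : Snat k) :
    ⁅u, s * t⁆ = ⁅u, s⁆ * t + s * ⁅u, t⁆ := by
  show actP k u (s * t) = _
  rw [Derivation.leibniz]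
  simp only [smul_eq_mul, lie_Snat_def]
  ring

variable (k)

/-- The `n`-th symmetric power of the adjoint module, as a Lie submodule of `S`. -/
def SD (n : ℕ) : LieSubmodule k (sl2 k) (Sg k) :=
  { MvPolynomial.homogeneousSubmodule (Fin 3) k n with
    lie_mem := by
      intro u p hp
      have hp' : p.IsHomogeneous n := hp
      show ((MvPolynomial.mkDerivation k fun j => toS k ⁅u, gens k j⁆) p).IsHomogeneous n
      apply MvPolynomial.isHomogeneous_mkDerivation
      · intro i
        show ((toS k) ⁅u, gens k i⁆).IsHomogeneous 1
        set w := ⁅u, gens k i⁆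
        have : toS k w = w 0 • X 0 + w 1 • X 1 + w 2 • X 2 := rfl
        rw [this]
        simp only [MvPolynomial.smul_eq_C_mul]
        apply MvPolynomial.IsHomogeneous.add
        apply MvPolynomial.IsHomogeneous.add
        all_goals
          exact (MvPolynomial.isHomogeneous_X _ _).C_mul _
      · exact hp' }

/-- The `m`-th symmetric power of the natural module, as a Lie submodule of
`S(L(1))`. -/
def PD (m : ℕ) : LieSubmodule k (sl2 k) (Snat k) :=
  { MvPolynomial.homogeneousSubmodule (Fin 2) k m with
    lie_mem := by
      intro u p hp
      have hp' : p.IsHomogeneous m := hp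
      show ((MvPolynomial.mkDerivation k (natRow k u)) p).IsHomogeneous m
      apply MvPolynomial.isHomogeneous_mkDerivation
      · intro i
        fin_cases i
        · show ((u 1 • (X 0 : Snat k) + u 2 • X 1)).IsHomogeneous 1
          simp only [MvPolynomial.smul_eq_C_mul]
          exact ((MvPolynomial.isHomogeneous_X _ _).C_mul _).add
            ((MvPolynomial.isHomogeneous_X _ _).C_mul _)
        · show ((u 0 • (X 0 : Snat k) - u 1 • X 1)).IsHomogeneous 1
          rw [sub_eq_add_neg, ← neg_smul]
          simp only [MvPolynomial.smul_eq_C_mul]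
          exact ((MvPolynomial.isHomogeneous_X _ _).C_mul _).add
            ((MvPolynomial.isHomogeneous_X _ _).C_mul _)
      · exact hp' }

variable {k}

lemma mem_SD_iff {n : ℕ} {p : Sg k} : p ∈ SD k n ↔ p.IsHomogeneous n := Iff.rfl

lemma mem_PD_iff {m : ℕ} {p : Snat k} : p ∈ PD k m ↔ p.IsHomogeneous m := Iff.rfl

end sl2
namespace sl2

variable (k : Type) [Field k]

/-- The trivial Lie module structure on `k`. -/
instance : LieRingModule (sl2 k) k where
  bracket _ _ := 0
  add_lie _ _ _ := by simp
  lie_add _ _ _ := by simp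
  leibniz_lie _ _ _ := by simp

@[simp] lemma lie_triv (u : sl2 k) (a : k) : ⁅u, a⁆ = 0 := rfl

instance : LieModule k (sl2 k) k where
  smul_lie _ _ _ := by simp
  lie_smul _ _ _ := by simp

end sl2

/-- `U = U(sl₂(k))`, the universal enveloping algebra. -/
abbrev UEnv (k : Type) [Field k] : Type := UniversalEnvelopingAlgebra k (sl2 k)

section UModules

variable (k : Type) [Field k]
variable (M : Type) [AddCommGroup M] [Module k M]
  [LieRingModule (sl2 k) M] [LieModule k (sl2 k) M]

/-- The `U`-module structure on a Lie module for `sl₂(k)`. -/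
def uModule : Module (UEnv k) M :=
  Module.compHom M
    (UniversalEnvelopingAlgebra.lift k (LieModule.toEnd k (sl2 k) M)).toRingHom

/-- A Lie module for `sl₂(k)`, regarded as an object in the category of modules
over the universal enveloping algebra. -/
def uMod : ModuleCat (UEnv k) :=
  letI := uModule k M
  ModuleCat.of (UEnv k) M

variable {k M}

lemma uSmul_def (a : UEnv k) (m : M) :
    letI := uModule k M
    a • m = UniversalEnvelopingAlgebra.lift k (LieModule.toEnd k (sl2 k) M) a m := rfl

lemma uSmul_iota (x : sl2 k) (m : M) :
    letI := uModule k M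
    (UniversalEnvelopingAlgebra.ι k x : UEnv k) • m = ⁅x, m⁆ := by
  letI := uModule k M
  rw [uSmul_def, UniversalEnvelopingAlgebra.lift_ι_apply]
  rfl

variable {N : Type} [AddCommGroup N] [Module k N]
  [LieRingModule (sl2 k) N] [LieModule k (sl2 k) N]

lemma uSmul_map (f : M →ₗ[k] N) (hf : ∀ (u : sl2 k) (m : M), f ⁅u, m⁆ = ⁅u, f m⁆)
    (a : UEnv k) (m : M) :
    letI := uModule k M
    letI := uModule k N
    f (a • m) = a • f m := by
  letI := uModule k M
  letI := uModule k N
  obtain ⟨b, rfl⟩ : ∃ b, UniversalEnvelopingAlgebra.mkAlgHom k (sl2 k) b = a :=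
    RingCon.mkₐ_surjective (α := k) _ a
  induction b using TensorAlgebra.induction generalizing m with
  | algebraMap r =>
      rw [AlgHom.commutes, uSmul_def, uSmul_def, AlgHom.commutes,
        Module.algebraMap_end_apply, AlgHom.commutes, Module.algebraMap_end_apply,
        map_smul]
  | ι x =>
      have hx : UniversalEnvelopingAlgebra.mkAlgHom k (sl2 k)
          (TensorAlgebra.ι k x) = UniversalEnvelopingAlgebra.ι k x := rfl
      rw [hx, uSmul_iota, uSmul_iota, hf]
  | mul x y hx hy =>
      rw [map_mul, mul_smul, mul_smul, hx, hy]
  | add x y hx hy =>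
      rw [map_add, add_smul, add_smul, map_add, hx, hy]

variable (k)

/-- A morphism of Lie modules induces a morphism of the corresponding
`U`-modules. -/
def uHom (f : M →ₗ[k] N) (hf : ∀ (u : sl2 k) (m : M), f ⁅u, m⁆ = ⁅u, f m⁆) :
    uMod k M ⟶ uMod k N :=
  letI := uModule k M
  letI := uModule k N
  ModuleCat.ofHom
    { toFun := f
      map_add' := f.map_add
      map_smul' := fun a m => uSmul_map f hf a m }

end UModules

section ExtU

variable (k : Type) [Field k]

/-- `Ext^n_U(k, M)` where `k` is the trivial `U`-module. -/
def extU (n : ℕ) (M : ModuleCat (UEnv k)) : ModuleCat k :=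
  ((Ext k (ModuleCat (UEnv k)) n).obj (Opposite.op (uMod k k))).obj M

/-- Functoriality of `Ext^n_U(k, -)`. -/
def extUMap (n : ℕ) {M N : ModuleCat (UEnv k)} (f : M ⟶ N) :
    extU k n M ⟶ extU k n N :=
  ((Ext k (ModuleCat (UEnv k)) n).obj (Opposite.op (uMod k k))).map f

end ExtU
namespace sl2

variable (k : Type) [Field k]

/-- The Casimir-type invariant `c = h² + 4ef ∈ S`. -/
def cElt : Sg k := X 1 ^ 2 + 4 * (X 0 * X 2)

variable {k}

lemma toS_apply (w : sl2 k) :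
    toS k w = w 0 • (X 0 : Sg k) + w 1 • X 1 + w 2 • X 2 := rfl

lemma lie_X0 (u : sl2 k) :
    ⁅u, (X 0 : Sg k)⁆ = C (2 * u 1) * X 0 - C (u 2) * X 1 := by
  show actS k u (X 0) = _
  rw [actS_X, gens₀, toS_apply]
  simp only [lie_apply₀, lie_apply₁, lie_apply₂, E_apply₀, E_apply₁, E_apply₂,
    MvPolynomial.smul_eq_C_mul, map_mul, map_sub, map_add, map_neg, map_ofNat,
    map_zero, map_one]
  ring

lemma lie_X1 (u : sl2 k) :
    ⁅u, (X 1 : Sg k)⁆ = C (2 * u 2) * X 2 - C (2 * u 0) * X 0 := by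
  show actS k u (X 1) = _
  rw [actS_X, gens₁, toS_apply]
  simp only [lie_apply₀, lie_apply₁, lie_apply₂, H_apply₀, H_apply₁, H_apply₂,
    MvPolynomial.smul_eq_C_mul, map_mul, map_sub, map_add, map_neg, map_ofNat,
    map_zero, map_one]
  ring

lemma lie_X2 (u : sl2 k) :
    ⁅u, (X 2 : Sg k)⁆ = C (u 0) * X 1 - C (2 * u 1) * X 2 := by
  show actS k u (X 2) = _
  rw [actS_X, gens₂, toS_apply]
  simp only [lie_apply₀, lie_apply₁, lie_apply₂, F_apply₀, F_apply₁, F_apply₂,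
    MvPolynomial.smul_eq_C_mul, map_mul, map_sub, map_add, map_neg, map_ofNat,
    map_zero, map_one]
  ring

lemma lie_C (u : sl2 k) (r : k) : ⁅u, (C r : Sg k)⁆ = 0 := by
  show actS k u (C r) = 0
  rw [show (C r : Sg k) = algebraMap k (Sg k) r from rfl]
  exact Derivation.map_algebraMap _ _

/-- `c` is an invariant of the adjoint action. -/
lemma lie_cElt (u : sl2 k) : ⁅u, cElt k⁆ = 0 := by
  rw [cElt, sq, lie_add, lie_mul_Sg,
    show (4 : Sg k) = C (4 : k) from by rw [map_ofNat],
    lie_mul_Sg, lie_C, lie_mul_Sg, lie_X0, lie_X1, lie_X2]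
  simp only [map_mul, map_ofNat]
  ring

/-- In characteristic `p`, the `p`-th powers `e^p, h^p, f^p` are invariants. -/
lemma lie_X_pow_p (p : ℕ) [CharP k p] (u : sl2 k) (i : Fin 3) :
    ⁅u, (X i ^ p : Sg k)⁆ = 0 := by
  show actS k u (X i ^ p) = 0
  rw [Derivation.leibniz_pow, nsmul_eq_mul,
    show ((p : ℕ) : Sg k) = C ((p : ℕ) : k) from (MvPolynomial.C_eq_coe_nat p).symm,
    CharP.cast_eq_zero, map_zero, zero_mul]

end sl2
namespace sl2

variable (k : Type) [Field k]

/-- The linear map `g → S` taking prescribed values `a, b, c` on the standard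
basis `e, h, f`. -/
def lmap (a b c : Sg k) : sl2 k →ₗ[k] Sg k where
  toFun u := u 0 • a + u 1 • b + u 2 • c
  map_add' u v := by simp only [add_apply, add_smul]; abel
  map_smul' t u := by
    simp only [smul_apply, RingHom.id_apply, smul_add, mul_smul]

variable {k}

@[simp] lemma lmap_E (a b c : Sg k) : lmap k a b c (E k) = a := by
  show E k 0 • a + E k 1 • b + E k 2 • c = a
  simp

@[simp] lemma lmap_H (a b c : Sg k) : lmap k a b c (H k) = b := by
  show H k 0 • a + H k 1 • b + H k 2 • c = b
  simp

@[simp] lemma lmap_F (a b c : Sg k) : lmap k a b c (F k) = c := by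
  show F k 0 • a + F k 1 • b + F k 2 • c = c
  simp

/-- The 1-cocycle condition for a linear map `g → S`
(Chevalley–Eilenberg complex for the standard resolution of `k` over `U`). -/
def IsCocycle1 (α : sl2 k →ₗ[k] Sg k) : Prop :=
  ∀ u v : sl2 k, α ⁅u, v⁆ = ⁅u, α v⁆ - ⁅v, α u⁆

/-- The 1-coboundary condition: `α` is the differential of some `z ∈ S`. -/
def IsCoboundary1 (α : sl2 k →ₗ[k] Sg k) : Prop :=
  ∃ z : Sg k, ∀ u : sl2 k, α u = ⁅u, z⁆

/-- The 2-cocycle condition, for a `2`-cochain recorded as the triple of its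
values on `h∧f`, `e∧f`, `e∧h`. -/
def IsCocycle2 (γ : Fin 3 → Sg k) : Prop :=
  ⁅E k, γ 0⁆ + ⁅F k, γ 2⁆ = ⁅H k, γ 1⁆

/-- The 2-coboundary condition: the differential of a linear map `β : g → S` is
the `2`-cochain `u∧v ↦ u·β(v) - v·β(u) - β([u,v])`, recorded as the triple of
its values on `h∧f`, `e∧f`, `e∧h`. -/
def IsCoboundary2 (γ : Fin 3 → Sg k) : Prop :=
  ∃ β : sl2 k →ₗ[k] Sg k,
    γ 0 = ⁅H k, β (F k)⁆ - ⁅F k, β (H k)⁆ - β ⁅H k, F k⁆ ∧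
    γ 1 = ⁅E k, β (F k)⁆ - ⁅F k, β (E k)⁆ - β ⁅E k, F k⁆ ∧
    γ 2 = ⁅E k, β (H k)⁆ - ⁅H k, β (E k)⁆ - β ⁅E k, H k⁆

lemma cElt_isHomogeneous : (cElt k).IsHomogeneous 2 := by
  rw [cElt]
  apply MvPolynomial.IsHomogeneous.add
  · exact MvPolynomial.isHomogeneous_X_pow _ _
  · rw [show (4 : Sg k) = C (4 : k) from by rw [map_ofNat]]
    have h := (MvPolynomial.isHomogeneous_C (Fin 3) (4 : k)).mul
      ((MvPolynomial.isHomogeneous_X k 0).mul (MvPolynomial.isHomogeneous_X k 2))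
    simpa using h

variable (k)

/-- Multiplication by `c` as a linear map `S^{n-2} → S^n`  (`2 ≤ n`). -/
def mulC (n : ℕ) (hn : 2 ≤ n) : ↥(SD k (n - 2)) →ₗ[k] ↥(SD k n) where
  toFun s := ⟨cElt k * (s : Sg k), by
    have := (cElt_isHomogeneous (k := k)).mul (mem_SD_iff.mp s.2)
    rw [Nat.add_sub_cancel' hn] at this
    exact mem_SD_iff.mpr this⟩
  map_add' s t := by
    apply Subtype.ext
    show cElt k * ((s : Sg k) + (t : Sg k)) = cElt k * (s : Sg k) + cElt k * (t : Sg k)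
    ring
  map_smul' a s := by
    apply Subtype.ext
    show cElt k * (a • (s : Sg k)) = a • (cElt k * (s : Sg k))
    rw [mul_smul_comm]

lemma mulC_equivariant (n : ℕ) (hn : 2 ≤ n) (u : sl2 k) (s : ↥(SD k (n - 2))) :
    mulC k n hn ⁅u, s⁆ = ⁅u, mulC k n hn s⁆ := by
  apply Subtype.ext
  show cElt k * (⁅u, (s : Sg k)⁆) = ⁅u, cElt k * (s : Sg k)⁆
  rw [lie_mul_Sg, lie_cElt, zero_mul, zero_add]

/-- The defining properties of the `g`-module map `φ : S^n → S^{2n}(L(1))`: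
it kills `c·S^{n-2}` and sends `e^i h^{n-i} ↦ (-2)^{-i} x^{n+i} y^{n-i}`,
`h^n ↦ x^n y^n`, `f^i h^{n-i} ↦ 2^{-i} x^{n-i} y^{n+i}`. -/
def IsPhi (n : ℕ) (φ : ↥(SD k n) →ₗ[k] ↥(PD k (2 * n))) : Prop :=
  (∀ (u : sl2 k) (s : ↥(SD k n)), φ ⁅u, s⁆ = ⁅u, φ s⁆) ∧
  (∀ (s : ↥(SD k n)) (t : Sg k), t.IsHomogeneous (n - 2) →
      (s : Sg k) = cElt k * t → φ s = 0) ∧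
  (∀ (s : ↥(SD k n)) (i : ℕ), i ≤ n →
      (s : Sg k) = X 0 ^ i * X 1 ^ (n - i) →
      ((φ s : Snat k)) = (((-2 : k) ^ i)⁻¹) • (X 0 ^ (n + i) * X 1 ^ (n - i))) ∧
  (∀ (s : ↥(SD k n)) (i : ℕ), i ≤ n →
      (s : Sg k) = X 2 ^ i * X 1 ^ (n - i) →
      ((φ s : Snat k)) = (((2 : k) ^ i)⁻¹) • (X 0 ^ (n - i) * X 1 ^ (n + i)))

end sl2

open sl2 in
lemma lmap_ext' {k : Type} [Field k] {α β : sl2 k →ₗ[k] Sg k}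
    (hE : α (E k) = β (E k)) (hH : α (H k) = β (H k)) (hF : α (F k) = β (F k)) :
    α = β := by
  apply LinearMap.ext
  intro w
  rw [decomp w]
  simp [map_add, map_smul, hE, hH, hF]

open sl2 in
/-- The identities
`c^{(p-1)/2}·C = hᵖ·δ + eᵖ·δ_e + fᵖ·δ_f` and
`c^{(p+1)/2}·δ = hᵖ·C - eᵖ·F + fᵖ·E` hold exactly as maps `g → S`. -/
theorem exact_identities_between_cocycles
    (k : Type) [Field k] (p : ℕ) [CharP k p] (hp : 2 < p)
    (u v u' v' : Sg k)
    (hu : 4 * (X 2 * u) = X 1 ^ p - X 1 * cElt k ^ ((p - 1) / 2))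
    (hv : 4 * (X 0 * v) = X 1 ^ p - X 1 * cElt k ^ ((p - 1) / 2))
    (hu' : 4 * (X 2 * u') = cElt k ^ ((p + 1) / 2) - X 1 ^ (p + 1))
    (hv' : 4 * (X 0 * v') = cElt k ^ ((p + 1) / 2) - X 1 ^ (p + 1)) :
    ((cElt k ^ ((p - 1) / 2) : Sg k) • lmap k u' (X 1 ^ p) v'
      = (X 1 ^ p : Sg k) • lmap k u (cElt k ^ ((p - 1) / 2)) v
        + (X 0 ^ p : Sg k) • lmap k (X 2 ^ (p - 1)) 0 0
        + (X 2 ^ p : Sg k) • lmap k 0 0 (X 0 ^ (p - 1))) ∧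
    ((cElt k ^ ((p + 1) / 2) : Sg k) • lmap k u (cElt k ^ ((p - 1) / 2)) v
      = (X 1 ^ p : Sg k) • lmap k u' (X 1 ^ p) v'
        - (X 0 ^ p : Sg k) • lmap k (X 1 * X 2 ^ (p - 1)) (-(2 * X 2 ^ p)) 0
        + (X 2 ^ p : Sg k) • lmap k 0 (2 * X 0 ^ p) (-(X 1 * X 0 ^ (p - 1)))) := by
  have hprime : p.Prime := (CharP.char_is_prime_or_zero k p).resolve_right (by omega)
  haveI : Fact p.Prime := ⟨hprime⟩
  obtain ⟨t, ht⟩ := hprime.odd_of_ne_two (by omega)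
  subst ht
  have ht1 : 1 ≤ t := by omega
  have e1 : (2 * t + 1 - 1) / 2 = t := by omega
  have e2 : (2 * t + 1 + 1) / 2 = t + 1 := by omega
  rw [e1] at hu hv ⊢
  rw [e2] at hu' hv' ⊢
  -- nonzero facts
  rw [show 2 * t + 1 - 1 = 2 * t from by omega]
  have h4 : (4 : Sg k) ≠ 0 := by
    have hnd : ¬ ((2 * t + 1) ∣ 4) := by
      intro hdvd
      have h1 := Nat.le_of_dvd (by norm_num) hdvd
      have h2 : t = 1 := by omega
      subst h2
      omega
    have : ((4 : ℕ) : Sg k) ≠ 0 := fun h => hnd ((CharP.cast_eq_zero_iff (Sg k) (2 * t + 1) 4).mp h)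
    simpa using this
  have h4X2 : (4 * X 2 : Sg k) ≠ 0 := mul_ne_zero h4 (MvPolynomial.X_ne_zero 2)
  have h4X0 : (4 * X 0 : Sg k) ≠ 0 := mul_ne_zero h4 (MvPolynomial.X_ne_zero 0)
  -- Frobenius
  have h2pow : (2 : Sg k) ^ (2 * t + 1) = 2 := by
    have h11 : ((1 : Sg k) + 1) ^ (2 * t + 1) = 1 ^ (2 * t + 1) + 1 ^ (2 * t + 1) :=
      add_pow_char (R := Sg k) (p := 2 * t + 1) (x := 1) (y := 1)
    simpa [one_add_one_eq_two] using h11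
  have hFrob : cElt k ^ (2 * t + 1)
      = X 1 ^ (2 * (2 * t + 1)) + 4 * (X 0 ^ (2 * t + 1) * X 2 ^ (2 * t + 1)) := by
    have h1 : (X 1 ^ 2 + 4 * (X 0 * X 2) : Sg k) ^ (2 * t + 1)
        = (X 1 ^ 2 : Sg k) ^ (2 * t + 1) + (4 * (X 0 * X 2) : Sg k) ^ (2 * t + 1) :=
      add_pow_char (R := Sg k) (p := 2 * t + 1) (x := _) (y := _)
    have h4p : (4 : Sg k) ^ (2 * t + 1) = 4 := by
      have : (4 : Sg k) = 2 ^ 2 := by norm_num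
      rw [this, ← pow_mul, mul_comm 2 (2 * t + 1), pow_mul, h2pow]
    rw [cElt, h1, mul_pow, mul_pow, h4p, ← pow_mul]
  constructor
  · apply lmap_ext' <;>
      simp only [LinearMap.add_apply, LinearMap.smul_apply, lmap_E, lmap_H, lmap_F,
        smul_eq_mul, mul_zero, add_zero]
    · apply mul_left_cancel₀ h4X2
      linear_combination (cElt k ^ t) * hu' - X 1 ^ (2 * t + 1) * hu + hFrob
    · ring
    · apply mul_left_cancel₀ h4X0
      linear_combination (cElt k ^ t) * hv' - X 1 ^ (2 * t + 1) * hv + hFrob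
  · apply lmap_ext' <;>
      simp only [LinearMap.add_apply, LinearMap.sub_apply, LinearMap.smul_apply,
        lmap_E, lmap_H, lmap_F, smul_eq_mul, mul_zero, add_zero, sub_zero]
    · apply mul_left_cancel₀ h4X2
      linear_combination (cElt k ^ (t + 1)) * hu - X 1 ^ (2 * t + 1) * hu'
        - X 1 * hFrob
    · linear_combination hFrob
    · apply mul_left_cancel₀ h4X0
      linear_combination (cElt k ^ (t + 1)) * hv - X 1 ^ (2 * t + 1) * hv'
        - X 1 * hFrob
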